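/- arXiv:2111.10348 — 4 statements merged into one kernel-verified Lean document; each statement's English description precedes it below -/
import Mathlib

section
/- For the mirror model with mirror density γ ∈ (0,1), for all times t with t < min(τ, N), the variance with respect to Q of b₁(t) satisfies Var_Q[b₁(t)] ≤ 1/(4N) + t/(2N). -/
/-!
Common setup for the mirror model of Lefevere–Sasa:
non-interacting particles on three vertical rings `R₁, R₂, R₃`
(columns `0,1,2` of `Fin 3`, vertical coordinate in `Fin R`, periodic),
with velocities `±e₊, ±e₋` and random mirrors on the internal walls.
-/

namespace Mirror

/-- The four velocities: `pe = e₊`, `me = -e₊`, `pm = e₋`, `mm = -e₋`. -/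
inductive Vel : Type
  | pe | me | pm | mm
  deriving DecidableEq

instance instFintypeVel : Fintype Vel :=
  ⟨{.pe, .me, .pm, .mm}, fun x => by cases x <;> simp⟩

/-- Whether the velocity has a positive horizontal component. -/
def Vel.right : Vel → Bool
  | .pe => true
  | .pm => true
  | _ => false

/-- Positions: column in `{1,2,3}` (encoded `Fin 3`) and vertical coordinate mod `R`. -/
abbrev Pos (R : ℕ) := Fin 3 × Fin R

/-- Single-particle states: position and velocity. -/
abbrev State (R : ℕ) := Pos R × Vel

/-- A mirror configuration: walls are indexed by `Fin 4`
(`0` = left outer wall, `1` = wall between `R₁,R₂`, `2` = wall between `R₂,R₃`,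
`3` = right outer wall) and by the vertical coordinate of the shifted site. -/
abbrev Config (R : ℕ) := Fin 4 → Fin R → Bool

/-- Configurations of the internal walls `S` (walls `1` and `2`). -/
abbrev IConfig (R : ℕ) := Fin 2 → Fin R → Bool

/-- Vertical successor (mod `R`). -/
def fsucc {R : ℕ} (k : Fin R) : Fin R :=
  ⟨(k.1 + 1) % R, Nat.mod_lt _ (Nat.lt_of_le_of_lt (Nat.zero_le _) k.isLt)⟩

/-- Vertical predecessor (mod `R`). -/
def fpred {R : ℕ} (k : Fin R) : Fin R :=
  ⟨(k.1 + (R - 1)) % R, Nat.mod_lt _ (Nat.lt_of_le_of_lt (Nat.zero_le _) k.isLt)⟩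

/-- Vertical coordinate of the shifted mirror site `q + p` encountered by a
particle at vertical coordinate `k` with velocity `p`. -/
def site {R : ℕ} (k : Fin R) : Vel → Fin R
  | .pe => k
  | .mm => k
  | .pm => fpred k
  | .me => fpred k

/-- Index of the wall on which the mirror site `q + p` lies. -/
def wall (i : Fin 3) (p : Vel) : Fin 4 :=
  if p.right then ⟨i.1 + 1, by have := i.isLt; omega⟩
  else ⟨i.1, by have := i.isLt; omega⟩

/-- One step of the single-particle mirror dynamics
`F_ξ(q,p) = (q + p + π_{ξ(q+p)}(p), π_{ξ(q+p)}(p))`. -/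
def step {R : ℕ} (ξ : Config R) : State R → State R :=
  fun x =>
    match x with
    | ((i, k), p) =>
      if ξ (wall i p) (site k p) then
        -- a mirror is present: the velocity is reflected, `p ↦ p̄`
        match p with
        | .pe => ((i, fsucc k), .mm)
        | .me => ((i, fpred k), .pm)
        | .pm => ((i, fpred k), .me)
        | .mm => ((i, fsucc k), .pe)
      else
        -- no mirror: the particle moves by `2p`
        match p with
        | .pe => ((i + 1, fsucc k), .pe)
        | .me => ((i - 1, fpred k), .me)
        | .pm => ((i + 1, fpred k), .pm)
        | .mm => ((i - 1, fsucc k), .mm)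

/-- The iterated dynamics `F_ξ(·,t)`. -/
def iter {R : ℕ} (ξ : Config R) (t : ℕ) : State R → State R := (step ξ)^[t]

/-- The configuration before the switching time: random mirrors `σ` on the wall
between `R₁` and `R₂`, full mirrors (closed wall) between `R₂` and `R₃`,
full mirrors on the outer walls. -/
def xi1 {R : ℕ} (σ : IConfig R) : Config R :=
  fun j k => if j.1 = 1 then σ 0 k else true

/-- The configuration after the switching time: random mirrors `σ` on both
internal walls, full mirrors on the outer walls. -/
def xi2 {R : ℕ} (σ : IConfig R) : Config R :=
  fun j k => if j.1 = 1 then σ 0 k else if j.1 = 2 then σ 1 k else true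

/-- The concatenated single-particle dynamics `F̃(·,t)`: `F¹` up to time `τ`,
then `F²`. -/
def Ftilde {R : ℕ} (σ : IConfig R) (τ t : ℕ) : State R → State R :=
  if t ≤ τ then iter (xi1 σ) t
  else (iter (xi2 σ) (t - τ)) ∘ (iter (xi1 σ) τ)

/-- The ring (column) on which a state sits. -/
def ring {R : ℕ} (x : State R) : Fin 3 := x.1.1

/-- Bernoulli(γ) product weight of an internal mirror configuration:
the density of the i.i.d. law `Q` of the mirrors. -/
noncomputable def wt (R : ℕ) (γ : ℝ) (σ : IConfig R) : ℝ :=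
  ∏ s : Fin 2 × Fin R, (if σ s.1 s.2 then γ else 1 - γ)

open Classical in
/-- `Q`-probability of an event on mirror configurations. -/
noncomputable def Qprob (R : ℕ) (γ : ℝ) (E : IConfig R → Prop) : ℝ :=
  ∑ σ : IConfig R, if E σ then wt R γ σ else 0

/-- `Q`-expectation of a function of the mirror configuration. -/
noncomputable def Qexp (R : ℕ) (γ : ℝ) (f : IConfig R → ℝ) : ℝ :=
  ∑ σ : IConfig R, wt R γ σ * f σ

/-- `Q`-variance. -/
noncomputable def Qvar (R : ℕ) (γ : ℝ) (f : IConfig R → ℝ) : ℝ :=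
  Qexp R γ (fun σ => (f σ - Qexp R γ f) ^ 2)

/-- `b₁(t)` for a given mirror configuration `σ`: the probability that a single
particle, started uniformly on ring `R₁`, is on ring `R₁` at time `t` under `F¹`. -/
noncomputable def b1 (R : ℕ) (σ : IConfig R) (t : ℕ) : ℝ :=
  (1 / (4 * (R : ℝ))) *
    ∑ x : State R, (if ring x = 0 ∧ ring (iter (xi1 σ) t x) = 0 then 1 else 0)

/-- Single-particle density of the initial Gibbs measure `ρ₀`
(uniform on `R₁ × P`). -/
noncomputable def rho0 (R : ℕ) : State R → ℝ :=
  fun x => if ring x = 0 then 1 / (4 * (R : ℝ)) else 0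

/-- Single-particle density of the Gibbs measure `ρ₁`
(uniform on `(R₁ ∪ R₂) × P`). -/
noncomputable def rho1 (R : ℕ) : State R → ℝ :=
  fun x => if ring x ≠ 2 then 1 / (8 * (R : ℝ)) else 0

/-- Single-particle density of the Gibbs measure `ρ^m` with ring densities `m`:
`ρ̂^m(q,p) = (1/(4R)) Σᵢ mⁱ 1_{Rᵢ}(q)`. -/
noncomputable def rhoM (R : ℕ) (m : Fin 3 → ℝ) : State R → ℝ :=
  fun x => (1 / (4 * (R : ℝ))) * m (ring x)

/-- The macroscopic observable `φ_N^i` (density of particles on ring `i`),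
for an `N = R` particle configuration. -/
noncomputable def phi (R : ℕ) (i : Fin 3) (x : Fin R → State R) : ℝ :=
  (1 / (R : ℝ)) * ∑ j, (if ring (x j) = i then 1 else 0)

/-- The cumulant generating function
`ψ_N(μ, η₁, η₂, U_t) = (1/N) log ⟨exp(N(η₁ φ_N¹ + η₂ φ_N²))(U_t(x))⟩_μ`,
where `μ` is the product of the single-particle density `μ̂` and the evolution
is the product of the single-particle map `F` (here `N = R`). -/
noncomputable def psi (R : ℕ) (μ : State R → ℝ) (η₁ η₂ : ℝ)
    (F : State R → State R) : ℝ :=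
  (1 / (R : ℝ)) * Real.log (∑ x : Fin R → State R,
    (∏ j, μ (x j)) *
      Real.exp ((R : ℝ) * (η₁ * phi R 0 (fun j => F (x j)) +
        η₂ * phi R 1 (fun j => F (x j)))))

/-- First component of `m_N = ∇_η ψ_N`. -/
noncomputable def mN1 (R : ℕ) (μ : State R → ℝ) (η₁ η₂ : ℝ)
    (F : State R → State R) : ℝ :=
  deriv (fun a => psi R μ a η₂ F) η₁

/-- Second component of `m_N = ∇_η ψ_N`. -/
noncomputable def mN2 (R : ℕ) (μ : State R → ℝ) (η₁ η₂ : ℝ)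
    (F : State R → State R) : ℝ :=
  deriv (fun b => psi R μ η₁ b F) η₂

/-- Expected density on ring `i` at the (single-particle) evolution `F`,
starting from the single-particle Gibbs measure with ring densities `m`:
`b_i = ⟨1_{R_i}(F(·))⟩_{ρ̂^m}`. -/
noncomputable def bm (R : ℕ) (m : Fin 3 → ℝ) (F : State R → State R)
    (i : Fin 3) : ℝ :=
  ∑ x : State R, rhoM R m x * (if ring (F x) = i then 1 else 0)

/-- Vertical translation by one site. -/
def vshift {R : ℕ} (x : State R) : State R := ((x.1.1, fsucc x.1.2), x.2)

/-- The averaged one-step transition kernel `K(x;x') = Q[F¹(x') = x]`. -/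
noncomputable def kern (R : ℕ) (γ : ℝ) (x x' : State R) : ℝ :=
  ∑ σ : IConfig R, wt R γ σ * (if step (xi1 σ) x' = x then 1 else 0)

end Mirror

/-!
Under `F¹` a particle keeps the sign of its vertical velocity and moves one site per step, so up
to time `t` its trajectory depends only on the `t` mirrors of the random wall at the heights it
probes, a window determined by its initial state. Writing `b₁(t) = (1/4N) Σₓ Iₓ`, the variance is
`(1/4N)² Σ Cov(Iₓ, I_x')`. A covariance vanishes unless both states start on `R₁` and their windows
meet, since disjoint sets of mirrors are independent, and it is at most `1/4` otherwise. For fixed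
`x` the windows of at most `2t` starting heights per velocity meet that of `x`, so
`Var ≤ (1/4N)² · 4N · 8t · 1/4 = t/(2N)`.
-/

namespace Mirror

section Expectation

variable {R : ℕ} {γ : ℝ}

lemma wt_nonneg (hγ : γ ∈ Set.Icc 0 1) (σ : IConfig R) : 0 ≤ wt R γ σ :=
  Finset.prod_nonneg fun s _ => by split <;> linarith [hγ.1, hγ.2]

lemma sum_wt : ∑ σ : IConfig R, wt R γ σ = 1 := by
  have h : ∑ τ : Fin 2 × Fin R → Bool, ∏ s, (if τ s then γ else 1 - γ) = 1 := by
    rw [← Fintype.prod_sum fun _ (b : Bool) => if b then γ else 1 - γ]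
    simp
  rw [← h]
  exact Fintype.sum_equiv (Equiv.curry (Fin 2) (Fin R) Bool).symm _ _ fun σ => rfl

lemma Qexp_const (c : ℝ) : Qexp R γ (fun _ => c) = c := by
  rw [Qexp, ← Finset.sum_mul, sum_wt, one_mul]

lemma Qexp_const_mul (c : ℝ) (f : IConfig R → ℝ) :
    Qexp R γ (fun σ => c * f σ) = c * Qexp R γ f := by
  simp only [Qexp, Finset.mul_sum]
  exact Finset.sum_congr rfl fun σ _ => by ring

lemma Qexp_sum {ι : Type*} (s : Finset ι) (f : ι → IConfig R → ℝ) :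
    Qexp R γ (fun σ => ∑ i ∈ s, f i σ) = ∑ i ∈ s, Qexp R γ (f i) := by
  simp only [Qexp, Finset.mul_sum]
  exact Finset.sum_comm

lemma Qexp_add (f g : IConfig R → ℝ) :
    Qexp R γ (fun σ => f σ + g σ) = Qexp R γ f + Qexp R γ g := by
  simp only [Qexp, mul_add, Finset.sum_add_distrib]

lemma Qexp_sub_const (f : IConfig R → ℝ) (c : ℝ) :
    Qexp R γ (fun σ => f σ - c) = Qexp R γ f - c := by
  simp only [Qexp, mul_sub]
  rw [Finset.sum_sub_distrib, ← Finset.sum_mul, sum_wt, one_mul]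

lemma Qexp_mono (hγ : γ ∈ Set.Icc 0 1) {f g : IConfig R → ℝ} (h : ∀ σ, f σ ≤ g σ) :
    Qexp R γ f ≤ Qexp R γ g :=
  Finset.sum_le_sum fun σ _ => mul_le_mul_of_nonneg_left (h σ) (wt_nonneg hγ σ)

variable (R γ) in
noncomputable def Qcov (f g : IConfig R → ℝ) : ℝ :=
  Qexp R γ (fun σ => (f σ - Qexp R γ f) * (g σ - Qexp R γ g))

lemma Qcov_comm (f g : IConfig R → ℝ) : Qcov R γ f g = Qcov R γ g f := by
  simp only [Qcov, mul_comm]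

lemma Qcov_const_left (c : ℝ) (g : IConfig R → ℝ) : Qcov R γ (fun _ => c) g = 0 := by
  simp only [Qcov, Qexp_const, sub_self, zero_mul]

lemma Qvar_eq_sub (f : IConfig R → ℝ) :
    Qvar R γ f = Qexp R γ (fun σ => f σ ^ 2) - Qexp R γ f ^ 2 := by
  rw [Qvar]
  set m := Qexp R γ f with hm
  have h : ∀ σ, wt R γ σ * (f σ - m) ^ 2
      = wt R γ σ * f σ ^ 2 - 2 * m * (wt R γ σ * f σ) + m ^ 2 * wt R γ σ := fun σ => by ring
  rw [Qexp, Finset.sum_congr rfl fun σ _ => h σ, Finset.sum_add_distrib,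
    Finset.sum_sub_distrib, ← Finset.mul_sum, ← Finset.mul_sum, sum_wt]
  change Qexp R γ (fun σ => f σ ^ 2) - 2 * m * m + m ^ 2 * 1 = _
  ring

lemma Qvar_le_of_indicator {f : IConfig R → ℝ} (hf : ∀ σ, f σ = 0 ∨ f σ = 1) :
    Qvar R γ f ≤ 1 / 4 := by
  have hsq : (fun σ => f σ ^ 2) = f := funext fun σ => by rcases hf σ with h | h <;> simp [h]
  rw [Qvar_eq_sub, hsq]
  nlinarith [sq_nonneg (Qexp R γ f - 1 / 2)]

lemma Qcov_le_Qvar_add_Qvar_div_two (hγ : γ ∈ Set.Icc 0 1) (f g : IConfig R → ℝ) :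
    Qcov R γ f g ≤ (Qvar R γ f + Qvar R γ g) / 2 := by
  calc Qcov R γ f g
      ≤ Qexp R γ (fun σ => (1 / 2) * ((f σ - Qexp R γ f) ^ 2 + (g σ - Qexp R γ g) ^ 2)) :=
        Qexp_mono hγ fun σ => by
          nlinarith [sq_nonneg (f σ - Qexp R γ f - (g σ - Qexp R γ g))]
    _ = (Qvar R γ f + Qvar R γ g) / 2 := by
        rw [Qexp_const_mul, Qexp_add, Qvar, Qvar]
        ring

lemma Qvar_const_mul_sum {ι : Type*} [Fintype ι] (c : ℝ) (f : ι → IConfig R → ℝ) :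
    Qvar R γ (fun σ => c * ∑ i, f i σ) = c ^ 2 * ∑ i, ∑ j, Qcov R γ (f i) (f j) := by
  have hmean : Qexp R γ (fun σ => c * ∑ i, f i σ) = c * ∑ i, Qexp R γ (f i) := by
    rw [Qexp_const_mul, Qexp_sum]
  have hdev : ∀ σ, (c * ∑ i, f i σ - c * ∑ i, Qexp R γ (f i)) ^ 2
      = c ^ 2 * ∑ i, ∑ j, (f i σ - Qexp R γ (f i)) * (f j σ - Qexp R γ (f j)) := fun σ => by
    rw [← Finset.sum_mul_sum, ← mul_sub, ← Finset.sum_sub_distrib]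
    ring
  simp only [Qvar, hmean, hdev, Qexp_const_mul, Qexp_sum, Qcov]

def DependsOnSites (f : IConfig R → ℝ) (A : Set (Fin 2 × Fin R)) : Prop :=
  ∀ a b : IConfig R, (∀ s ∈ A, a s.1 s.2 = b s.1 s.2) → f a = f b

open Classical in
noncomputable def mixConfig (A : Set (Fin 2 × Fin R)) (a b : IConfig R) : IConfig R :=
  fun i k => if (i, k) ∈ A then a i k else b i k

lemma wt_mixConfig_mul (A : Set (Fin 2 × Fin R)) (a b : IConfig R) :
    wt R γ (mixConfig A a b) * wt R γ (mixConfig A b a) = wt R γ a * wt R γ b := by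
  simp only [wt, mixConfig, ← Finset.prod_mul_distrib]
  refine Finset.prod_congr rfl fun s _ => ?_
  by_cases h : (s.1, s.2) ∈ A
  · simp only [if_pos h]
  · simp only [if_neg h]; ring

lemma mixConfig_mixConfig (A : Set (Fin 2 × Fin R)) (a b : IConfig R) :
    mixConfig A (mixConfig A a b) (mixConfig A b a) = a := by
  funext i k
  by_cases h : (i, k) ∈ A <;> simp [mixConfig, h]

/-- Independence of the mirrors: exchanging the sites in `A` between two independent copies
`(a, b)` of the configuration is a weight-preserving involution of pairs. -/
lemma Qexp_mul_of_dependsOnSites {A : Set (Fin 2 × Fin R)} {f g : IConfig R → ℝ}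
    (hf : DependsOnSites f A) (hg : DependsOnSites g Aᶜ) :
    Qexp R γ (fun σ => f σ * g σ) = Qexp R γ f * Qexp R γ g := by
  let swap : IConfig R × IConfig R ≃ IConfig R × IConfig R :=
    ⟨fun p => (mixConfig A p.1 p.2, mixConfig A p.2 p.1),
     fun p => (mixConfig A p.1 p.2, mixConfig A p.2 p.1),
     fun p => Prod.ext (mixConfig_mixConfig A _ _) (mixConfig_mixConfig A _ _),
     fun p => Prod.ext (mixConfig_mixConfig A _ _) (mixConfig_mixConfig A _ _)⟩
  symm
  calc Qexp R γ f * Qexp R γ g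
      = ∑ p : IConfig R × IConfig R, (wt R γ p.1 * f p.1) * (wt R γ p.2 * g p.2) := by
        rw [Qexp, Qexp, Finset.sum_mul_sum, Fintype.sum_prod_type]
    _ = ∑ p : IConfig R × IConfig R, (wt R γ p.1 * (f p.1 * g p.1)) * wt R γ p.2 := by
        refine Fintype.sum_equiv swap _ _ fun p => ?_
        have hfp : f (mixConfig A p.1 p.2) = f p.1 :=
          hf _ _ fun s hs => by simp [mixConfig, hs]
        have hgp : g (mixConfig A p.1 p.2) = g p.2 :=
          hg _ _ fun s hs => by simp [mixConfig, show s ∉ A from hs]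
        simp only [swap, Equiv.coe_fn_mk, hfp, hgp]
        linear_combination (-(f p.1 * g p.2)) * wt_mixConfig_mul (γ := γ) A p.1 p.2
    _ = Qexp R γ (fun σ => f σ * g σ) := by
        rw [Fintype.sum_prod_type]
        simp only [← Finset.mul_sum, sum_wt, mul_one]
        rfl

lemma Qcov_eq_zero_of_dependsOnSites {A : Set (Fin 2 × Fin R)} {f g : IConfig R → ℝ}
    (hf : DependsOnSites f A) (hg : DependsOnSites g Aᶜ) : Qcov R γ f g = 0 := by
  rw [Qcov, Qexp_mul_of_dependsOnSites (fun a b h => by rw [hf a b h])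
    (fun a b h => by rw [hg a b h]), Qexp_sub_const, sub_self, zero_mul]

end Expectation

section Trajectory

variable {R : ℕ}

lemma fpred_fsucc (k : Fin R) : fpred (fsucc k) = k := by
  have : k.1 + 1 + (R - 1) = k.1 + R := by omega
  ext
  simp only [fsucc, fpred, Nat.mod_add_mod, this, Nat.add_mod_right, Nat.mod_eq_of_lt k.isLt]

lemma fsucc_fpred (k : Fin R) : fsucc (fpred k) = k := by
  have : k.1 + (R - 1) + 1 = k.1 + R := by omega
  ext
  simp only [fsucc, fpred, Nat.mod_add_mod, this, Nat.add_mod_right, Nat.mod_eq_of_lt k.isLt]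

def vrot : Equiv.Perm (Fin R) := ⟨fsucc, fpred, fpred_fsucc, fsucc_fpred⟩

lemma vrot_zpow_fsucc (n : ℤ) (k : Fin R) : (vrot ^ n) (fsucc k) = (vrot ^ (n + 1)) k := by
  rw [zpow_add_one, Equiv.Perm.mul_apply]; rfl

lemma vrot_zpow_fpred (n : ℤ) (k : Fin R) : (vrot ^ n) (fpred k) = (vrot ^ (n - 1)) k := by
  rw [zpow_sub_one, Equiv.Perm.mul_apply]; rfl

lemma eq_vrot_zpow_of_vrot_zpow_eq {a b : ℤ} {k k' : Fin R}
    (h : (vrot ^ a) k = (vrot ^ b) k') : k' = (vrot ^ (a - b)) k := by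
  rw [sub_eq_neg_add, zpow_add, Equiv.Perm.mul_apply, h, ← Equiv.Perm.mul_apply, ← zpow_add,
    neg_add_cancel, zpow_zero, Equiv.Perm.one_apply]

-- The dynamics never changes the vertical direction of a velocity.
def Vel.up : Vel → Bool
  | .pe => true
  | .mm => true
  | _ => false

def probeOffset (p : Vel) (s : ℕ) : ℤ := if p.up then s else -(s + 1)

/-- The height of the mirror site probed at step `s` by the trajectory started at `x`;
it does not depend on the mirror configuration. -/
def probe (x : State R) (s : ℕ) : Fin R := (vrot ^ probeOffset x.2 s) x.1.2

lemma site_eq_probe_zero (x : State R) : site x.1.2 x.2 = probe x 0 := by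
  obtain ⟨⟨i, k⟩, p⟩ := x
  cases p <;> simp [site, probe, probeOffset, Vel.up] <;> rfl

lemma probe_step (ξ : Config R) (x : State R) (s : ℕ) :
    probe (step ξ x) s = probe x (s + 1) := by
  obtain ⟨⟨i, k⟩, p⟩ := x
  cases p <;> simp only [step] <;> split <;>
    simp only [probe, probeOffset, Vel.up, vrot_zpow_fsucc, vrot_zpow_fpred] <;>
    congr 2

lemma step_xi1_congr {σ σ' : IConfig R} {x : State R}
    (h : σ 0 (probe x 0) = σ' 0 (probe x 0)) : step (xi1 σ) x = step (xi1 σ') x := by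
  obtain ⟨⟨i, k⟩, p⟩ := x
  have hmirror : xi1 σ (wall i p) (site k p) = xi1 σ' (wall i p) (site k p) := by
    simp only [xi1, site_eq_probe_zero ((i, k), p)]
    split
    · exact h
    · rfl
  simp only [step, hmirror]

lemma iter_xi1_congr {σ σ' : IConfig R} {t : ℕ} {x : State R}
    (h : ∀ s < t, σ 0 (probe x s) = σ' 0 (probe x s)) :
    iter (xi1 σ) t x = iter (xi1 σ') t x := by
  induction t generalizing x with
  | zero => rfl
  | succ t ih =>
    have hstep : step (xi1 σ) x = step (xi1 σ') x := step_xi1_congr (h 0 t.succ_pos)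
    simp only [iter, Function.iterate_succ_apply] at ih ⊢
    rw [hstep]
    exact ih fun s hs => by rw [probe_step]; exact h (s + 1) (by omega)

def window (x : State R) (t : ℕ) : Finset (Fin R) := (Finset.range t).image (probe x)

def offsetBase (p : Vel) (t : ℕ) : ℤ := if p.up then 0 else -t

lemma probeOffset_mem_Ico {p : Vel} {s t : ℕ} (hs : s < t) :
    probeOffset p s ∈ Finset.Ico (offsetBase p t) (offsetBase p t + t) := by
  rw [Finset.mem_Ico]
  unfold probeOffset offsetBase
  split <;> omega

/-- The starting heights, for velocity `p'`, whose windows may meet the window of `x`. -/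
noncomputable def reach (x : State R) (t : ℕ) (p' : Vel) : Finset (Fin R) :=
  (Finset.Ioo (offsetBase x.2 t - offsetBase p' t - t) (offsetBase x.2 t - offsetBase p' t + t)).image
    fun n => (vrot ^ n) x.1.2

lemma card_reach_le (x : State R) (t : ℕ) (p' : Vel) : (reach x t p').card ≤ 2 * t := by
  refine Finset.card_image_le.trans ?_
  rw [Int.card_Ioo]
  omega

lemma mem_reach_of_not_disjoint {x x' : State R} {t : ℕ}
    (h : ¬Disjoint (window x t) (window x' t)) : x'.1.2 ∈ reach x t x'.2 := by
  obtain ⟨u, hu, hu'⟩ := Finset.not_disjoint_iff.1 h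
  obtain ⟨s, hs, rfl⟩ := Finset.mem_image.1 hu
  obtain ⟨s', hs', hss'⟩ := Finset.mem_image.1 hu'
  have ha := probeOffset_mem_Ico (p := x.2) (Finset.mem_range.1 hs)
  have hb := probeOffset_mem_Ico (p := x'.2) (Finset.mem_range.1 hs')
  rw [Finset.mem_Ico] at ha hb
  refine Finset.mem_image.2 ⟨_, Finset.mem_Ioo.2 ⟨by omega, by omega⟩,
    (eq_vrot_zpow_of_vrot_zpow_eq hss'.symm).symm⟩

lemma card_overlapping_le (x : State R) (t : ℕ) :
    (Finset.univ.filter fun x' : State R =>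
      ring x' = 0 ∧ ¬Disjoint (window x t) (window x' t)).card ≤ 8 * t := by
  classical
  calc _ ≤ (Finset.univ.biUnion fun p' : Vel => (reach x t p').image fun k => ((0, k), p')).card := by
        refine Finset.card_le_card fun x' hx' => ?_
        obtain ⟨hring, hmeet⟩ := (Finset.mem_filter.1 hx').2
        refine Finset.mem_biUnion.2 ⟨x'.2, Finset.mem_univ _,
          Finset.mem_image.2 ⟨x'.1.2, mem_reach_of_not_disjoint hmeet, ?_⟩⟩
        rw [← hring]
        rfl
    _ ≤ ∑ p' : Vel, ((reach x t p').image fun k => (((0 : Fin 3), k), p')).card :=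
        Finset.card_biUnion_le
    _ ≤ ∑ _p' : Vel, 2 * t :=
        Finset.sum_le_sum fun p' _ => Finset.card_image_le.trans (card_reach_le x t p')
    _ = 8 * t := by
        rw [Finset.sum_const, Finset.card_univ, show Fintype.card Vel = 4 from rfl, smul_eq_mul]
        ring

end Trajectory

section RingOneIndicator

variable {R : ℕ}

noncomputable def ringOneIndicator (t : ℕ) (x : State R) (σ : IConfig R) : ℝ :=
  if ring x = 0 ∧ ring (iter (xi1 σ) t x) = 0 then 1 else 0

lemma ringOneIndicator_eq_zero_or_one (t : ℕ) (x : State R) (σ : IConfig R) :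
    ringOneIndicator t x σ = 0 ∨ ringOneIndicator t x σ = 1 := by
  unfold ringOneIndicator
  split <;> simp

lemma ringOneIndicator_of_ring_ne_zero {x : State R} (hx : ring x ≠ 0) (t : ℕ) :
    ringOneIndicator t x = fun _ => 0 :=
  funext fun _ => if_neg fun h => hx h.1

lemma ringOneIndicator_dependsOnSites (t : ℕ) (x : State R) :
    DependsOnSites (ringOneIndicator t x) {s | s.1 = 0 ∧ s.2 ∈ window x t} := by
  intro a b h
  rw [ringOneIndicator, ringOneIndicator, iter_xi1_congr fun s hs =>
    h (0, probe x s) ⟨rfl, Finset.mem_image_of_mem _ (Finset.mem_range.2 hs)⟩]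

/-- Starting states whose windows are disjoint see independent mirrors. -/
lemma Qcov_ringOneIndicator_le {γ : ℝ} (hγ : γ ∈ Set.Icc 0 1) (t : ℕ) (x x' : State R) :
    Qcov R γ (ringOneIndicator t x) (ringOneIndicator t x') ≤
      if ring x' = 0 ∧ ¬Disjoint (window x t) (window x' t) then 1 / 4 else 0 := by
  split_ifs with h
  · have hx := Qvar_le_of_indicator (γ := γ) (ringOneIndicator_eq_zero_or_one t x)
    have hx' := Qvar_le_of_indicator (γ := γ) (ringOneIndicator_eq_zero_or_one t x')
    linarith [Qcov_le_Qvar_add_Qvar_div_two hγ (ringOneIndicator t x) (ringOneIndicator t x')]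
  obtain hring | hdisj := not_and_or.1 h
  · rw [ringOneIndicator_of_ring_ne_zero hring, Qcov_comm, Qcov_const_left]
  · refine (Qcov_eq_zero_of_dependsOnSites (ringOneIndicator_dependsOnSites t x) ?_).le
    intro a b hab
    refine ringOneIndicator_dependsOnSites t x' a b fun s hs => hab s fun hA => ?_
    exact Finset.disjoint_left.1 (not_not.1 hdisj) hA.2 hs.2

lemma sum_Qcov_ringOneIndicator_le {γ : ℝ} (hγ : γ ∈ Set.Icc 0 1) (t : ℕ) (x : State R) :
    ∑ x', Qcov R γ (ringOneIndicator t x) (ringOneIndicator t x') ≤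
      if ring x = 0 then 2 * (t : ℝ) else 0 := by
  split_ifs with hx
  · calc ∑ x', Qcov R γ (ringOneIndicator t x) (ringOneIndicator t x')
        ≤ ∑ x' : State R,
            if ring x' = 0 ∧ ¬Disjoint (window x t) (window x' t) then (1 / 4 : ℝ) else 0 :=
          Finset.sum_le_sum fun x' _ => Qcov_ringOneIndicator_le hγ t x x'
      _ = (Finset.univ.filter fun x' : State R =>
            ring x' = 0 ∧ ¬Disjoint (window x t) (window x' t)).card * (1 / 4) := by
          rw [← Finset.sum_filter, Finset.sum_const, nsmul_eq_mul]
      _ ≤ (8 * t : ℕ) * (1 / 4 : ℝ) := by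
          gcongr
          exact card_overlapping_le x t
      _ = 2 * t := by push_cast; ring
  · simp [ringOneIndicator_of_ring_ne_zero hx, Qcov_const_left]

lemma sum_ite_ring_eq_zero (c : ℝ) :
    ∑ x : State R, (if ring x = 0 then c else 0) = 4 * R * c := by
  simp [Fintype.sum_prod_type, ring, Fin.sum_univ_three, show Fintype.card Vel = 4 from rfl]
  ring

end RingOneIndicator

theorem variance_b1_general (γ : ℝ) (hγ : γ ∈ Set.Ioo (0 : ℝ) 1) (N t : ℕ) :
    Qvar N γ (fun σ => b1 N σ t) ≤ 1 / (4 * (N : ℝ)) + (t : ℝ) / (2 * (N : ℝ)) := by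
  calc Qvar N γ (fun σ => b1 N σ t)
      = (1 / (4 * (N : ℝ))) ^ 2 *
          ∑ x, ∑ x', Qcov N γ (ringOneIndicator t x) (ringOneIndicator t x') :=
        Qvar_const_mul_sum _ (ringOneIndicator t)
    _ ≤ (1 / (4 * (N : ℝ))) ^ 2 * ∑ x : State N, if ring x = 0 then 2 * (t : ℝ) else 0 := by
        gcongr with x
        exact sum_Qcov_ringOneIndicator_le (Set.Ioo_subset_Icc_self hγ) t x
    _ = t / (2 * N) := by
        rw [sum_ite_ring_eq_zero]
        rcases eq_or_ne (N : ℝ) 0 with hN | hN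
        · simp [hN]
        · field_simp
          ring
    _ ≤ 1 / (4 * (N : ℝ)) + t / (2 * N) := le_add_of_nonneg_left (by positivity)

/-- variance bound, eq. (37) of the paper.
For `γ ∈ (0,1)` and all `t < min(τ, N)`,
`Var_Q[b₁(t)] ≤ 1/(4N) + t/(2N)`. -/
theorem variance_b1 (γ : ℝ) (hγ : γ ∈ Set.Ioo (0 : ℝ) 1) (τ N t : ℕ)
    (ht : t < min τ N) :
    Qvar N γ (fun σ => b1 N σ t) ≤ 1 / (4 * (N : ℝ)) + (t : ℝ) / (2 * (N : ℝ)) :=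
  variance_b1_general γ hγ N t

end Mirror
end

section
/- For any η₁, η₂ ∈ ℝ, each of the two components of the function f(x) = ( x e^{η₁} / (x e^{η₁} + (1−x) e^{η₂}), (1−x) e^{η₂} / (x e^{η₁} + (1−x) e^{η₂}) ) is Lipschitz continuous on [0,1] with Lipschitz constant e^{|η₁−η₂|}. -/
/-!
Write `D x = x a + (1 - x) b` with `a = e^{η₁}`, `b = e^{η₂}`. Both components differ at `x` and `y`
by `± a b (x - y) / (D x D y)`, and `D ≥ min a b` on `[0,1]`, so the Lipschitz constant is at most
`a b / min(a, b)² = max(a, b) / min(a, b) = e^{|η₁ - η₂|}`.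
-/

open Real Set

section ConvexCombination

variable {a b x y : ℝ}

lemma min_le_convexComb (hx : x ∈ Icc (0 : ℝ) 1) : min a b ≤ x * a + (1 - x) * b := by
  nlinarith [min_le_left a b, min_le_right a b, hx.1, hx.2]

lemma convexComb_pos (ha : 0 < a) (hb : 0 < b) (hx : x ∈ Icc (0 : ℝ) 1) :
    0 < x * a + (1 - x) * b :=
  (lt_min ha hb).trans_le (min_le_convexComb hx)

lemma mul_div_convexComb_sub (hDx : x * a + (1 - x) * b ≠ 0) (hDy : y * a + (1 - y) * b ≠ 0) :
    x * a / (x * a + (1 - x) * b) - y * a / (y * a + (1 - y) * b) =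
      a * b * (x - y) / ((x * a + (1 - x) * b) * (y * a + (1 - y) * b)) := by
  rw [div_sub_div _ _ hDx hDy]
  ring

lemma one_sub_mul_div_convexComb (hDx : x * a + (1 - x) * b ≠ 0) :
    (1 - x) * b / (x * a + (1 - x) * b) = 1 - x * a / (x * a + (1 - x) * b) := by
  field_simp
  ring

lemma abs_mul_div_convexComb_sub_le (ha : 0 < a) (hb : 0 < b)
    (hx : x ∈ Icc (0 : ℝ) 1) (hy : y ∈ Icc (0 : ℝ) 1) :
    |x * a / (x * a + (1 - x) * b) - y * a / (y * a + (1 - y) * b)| ≤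
      a * b / min a b ^ 2 * |x - y| := by
  have hDx := convexComb_pos ha hb hx
  have hDy := convexComb_pos ha hb hy
  have hmin : min a b ^ 2 ≤ (x * a + (1 - x) * b) * (y * a + (1 - y) * b) := by
    rw [sq]
    exact mul_le_mul (min_le_convexComb hx) (min_le_convexComb hy)
      (lt_min ha hb).le hDx.le
  rw [mul_div_convexComb_sub hDx.ne' hDy.ne', abs_div, abs_mul,
    abs_of_pos (mul_pos ha hb), abs_of_pos (mul_pos hDx hDy), div_mul_eq_mul_div]
  exact div_le_div_of_nonneg_left (by positivity) (by positivity) hmin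

end ConvexCombination

lemma exp_mul_exp_div_min_sq (η₁ η₂ : ℝ) :
    exp η₁ * exp η₂ / min (exp η₁) (exp η₂) ^ 2 = exp |η₁ - η₂| := by
  rw [← exp_monotone.map_min, ← exp_add, ← exp_nat_mul, ← exp_sub, ← max_sub_min_eq_abs',
    ← min_add_max η₁ η₂]
  push_cast
  ring_nf

/-- for any `η₁ η₂ ∈ ℝ`, both components of
`f(x) = (x e^{η₁} / (x e^{η₁} + (1-x) e^{η₂}), (1-x) e^{η₂} / (x e^{η₁} + (1-x) e^{η₂}))`
are Lipschitz on `[0,1]` with constant `e^{|η₁-η₂|}`. -/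
theorem f_lipschitz (η₁ η₂ : ℝ) (x y : ℝ)
    (hx : x ∈ Set.Icc (0 : ℝ) 1) (hy : y ∈ Set.Icc (0 : ℝ) 1) :
    |x * Real.exp η₁ / (x * Real.exp η₁ + (1 - x) * Real.exp η₂) -
      y * Real.exp η₁ / (y * Real.exp η₁ + (1 - y) * Real.exp η₂)| ≤
      Real.exp |η₁ - η₂| * |x - y| ∧
    |(1 - x) * Real.exp η₂ / (x * Real.exp η₁ + (1 - x) * Real.exp η₂) -
      (1 - y) * Real.exp η₂ / (y * Real.exp η₁ + (1 - y) * Real.exp η₂)| ≤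
      Real.exp |η₁ - η₂| * |x - y| := by
  have hfirst := abs_mul_div_convexComb_sub_le (exp_pos η₁) (exp_pos η₂) hx hy
  rw [exp_mul_exp_div_min_sq] at hfirst
  refine ⟨hfirst, ?_⟩
  rw [one_sub_mul_div_convexComb (convexComb_pos (exp_pos η₁) (exp_pos η₂) hx).ne',
    one_sub_mul_div_convexComb (convexComb_pos (exp_pos η₁) (exp_pos η₂) hy).ne',
    sub_sub_sub_cancel_left, abs_sub_comm]
  exact hfirst
end

section
/- Let Σ be a finite nonempty set, n ∈ ℕ, φ : Σ → ℝⁿ, and U : Σ → Σ a bijection. For a probability distribution p on Σ let S(p) = −Σ_{x∈Σ} p(x) log p(x) be its Shannon entropy (with 0 log 0 = 0), and let ⟨φ⟩_p = Σ_x p(x) φ(x). Suppose ρ is a probability distribution on Σ maximizing S over all probability distributions p with ⟨φ⟩_p = m (where m = ⟨φ⟩_ρ), and suppose ρ' is a probability distribution maximizing S over all probability distributions p with ⟨φ⟩_p = m', where m' = Σ_x ρ(x) φ(U(x)). Then S(ρ) ≤ S(ρ'). -/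
/-- Proposition 1 of the paper, finite-state second law.
Let `Σ` be finite and nonempty, `φ : Σ → ℝⁿ`, `U : Σ → Σ` a bijection.
If `ρ` maximizes the Shannon entropy `S(p) = -Σ p(x) log p(x)` among
distributions `p` with `⟨φ⟩_p = ⟨φ⟩_ρ`, and `ρ'` maximizes `S` among
distributions with `⟨φ⟩_p = m' := Σ_x ρ(x) φ(U(x))`, then `S(ρ) ≤ S(ρ')`. -/
theorem second_law_finite
    {S : Type*} [Fintype S] [Nonempty S] (n : ℕ) (φ : S → Fin n → ℝ)
    (U : S → S) (hU : Function.Bijective U)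
    (ρ ρ' : S → ℝ)
    (hρ0 : ∀ x, 0 ≤ ρ x) (hρ1 : ∑ x, ρ x = 1)
    (hρ'0 : ∀ x, 0 ≤ ρ' x) (hρ'1 : ∑ x, ρ' x = 1)
    (hmax : ∀ p : S → ℝ, (∀ x, 0 ≤ p x) → (∑ x, p x) = 1 →
      (∑ x, p x • φ x) = (∑ x, ρ x • φ x) →
      (-∑ x, p x * Real.log (p x)) ≤ (-∑ x, ρ x * Real.log (ρ x)))
    (hρ'constr : (∑ x, ρ' x • φ x) = ∑ x, ρ x • φ (U x))
    (hmax' : ∀ p : S → ℝ, (∀ x, 0 ≤ p x) → (∑ x, p x) = 1 →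
      (∑ x, p x • φ x) = (∑ x, ρ' x • φ x) →
      (-∑ x, p x * Real.log (p x)) ≤ (-∑ x, ρ' x * Real.log (ρ' x))) :
    (-∑ x, ρ x * Real.log (ρ x)) ≤ (-∑ x, ρ' x * Real.log (ρ' x)) := by
  set e := Equiv.ofBijective U hU
  set p : S → ℝ := fun x => ρ (e.symm x) with hp
  have hsum : ∀ f : S → ℝ, ∑ x, f (e.symm x) = ∑ x, f x := fun f =>
    Equiv.sum_comp e.symm f
  have h1 : (-∑ x, ρ x * Real.log (ρ x)) = (-∑ x, p x * Real.log (p x)) := by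
    simp [hp, hsum (fun y => ρ y * Real.log (ρ y))]
  rw [h1]
  apply hmax' p (fun x => hρ0 _)
  · exact hsum ρ ▸ hρ1
  · rw [hρ'constr]
    calc ∑ x, p x • φ x = ∑ x, ρ (e.symm x) • φ (e (e.symm x)) := by
          simp [hp]
      _ = ∑ x, ρ x • φ (e x) := Equiv.sum_comp e.symm (fun y => ρ y • φ (e y))
      _ = ∑ x, ρ x • φ (U x) := rfl
end

section
/- Let Σ be a finite nonempty set, n ∈ ℕ, φ : Σ → ℝⁿ, and let U¹, U² : Σ → Σ be bijections. For a probability distribution p on Σ let S(p) = −Σ_x p(x) log p(x) (with 0 log 0 = 0) and ⟨φ⟩_p = Σ_x p(x) φ(x). Suppose: ρ maximizes S subject to ⟨φ⟩ = m (with m = ⟨φ⟩_ρ); ρ' maximizes S subject to ⟨φ⟩ = m', where m' = Σ_x ρ(x) φ(U¹(x)); and ρ'' maximizes S subject to ⟨φ⟩ = m'', where m'' = Σ_x ρ'(x) φ(U²(x)). Then S(ρ) ≤ S(ρ') ≤ S(ρ''). -/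
lemma push_step {S : Type*} [Fintype S] (n : ℕ) (φ : S → Fin n → ℝ)
    (U : S → S) (hU : Function.Bijective U) (ρ ρ' : S → ℝ)
    (hρ0 : ∀ x, 0 ≤ ρ x) (hρ1 : ∑ x, ρ x = 1)
    (hρ'constr : (∑ x, ρ' x • φ x) = ∑ x, ρ x • φ (U x))
    (hmax' : ∀ p : S → ℝ, (∀ x, 0 ≤ p x) → (∑ x, p x) = 1 →
      (∑ x, p x • φ x) = (∑ x, ρ' x • φ x) →
      (-∑ x, p x * Real.log (p x)) ≤ (-∑ x, ρ' x * Real.log (ρ' x))) :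
    (-∑ x, ρ x * Real.log (ρ x)) ≤ (-∑ x, ρ' x * Real.log (ρ' x)) := by
  set e := Equiv.ofBijective U hU
  set p : S → ℝ := fun x => ρ (e.symm x) with hp
  have key : ∀ f : S → ℝ, ∑ x, p x * f x = ∑ x, ρ x * f (U x) := by
    intro f
    rw [← Equiv.sum_comp e (fun x => p x * f x)]
    simp [p, e]
  have hsum : ∑ x, p x = 1 := by
    have := key (fun _ => 1); simpa using this.trans (by simpa using hρ1)
  have hconstr : (∑ x, p x • φ x) = (∑ x, ρ' x • φ x) := by
    rw [hρ'constr]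
    funext i
    rw [Finset.sum_apply, Finset.sum_apply]
    simpa [Pi.smul_apply, smul_eq_mul] using key (fun x => φ x i)
  have hent : (∑ x, p x * Real.log (p x)) = ∑ x, ρ x * Real.log (ρ x) := by
    rw [← Equiv.sum_comp e (fun x => p x * Real.log (p x))]
    simp [p, e]
  have := hmax' p (fun x => hρ0 _) hsum hconstr
  rwa [hent] at this


/-- Proposition 2 of the paper, finite-state next-day second
law. Let `Σ` be finite and nonempty, `φ : Σ → ℝⁿ`, `U¹, U² : Σ → Σ` bijections.
If `ρ` maximizes the Shannon entropy subject to `⟨φ⟩ = ⟨φ⟩_ρ`, `ρ'` maximizes it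
subject to `⟨φ⟩ = m' := Σ_x ρ(x) φ(U¹(x))`, and `ρ''` maximizes it subject to
`⟨φ⟩ = m'' := Σ_x ρ'(x) φ(U²(x))`, then `S(ρ) ≤ S(ρ') ≤ S(ρ'')`. -/
theorem next_day_second_law_finite
    {S : Type*} [Fintype S] [Nonempty S] (n : ℕ) (φ : S → Fin n → ℝ)
    (U₁ U₂ : S → S) (hU₁ : Function.Bijective U₁) (hU₂ : Function.Bijective U₂)
    (ρ ρ' ρ'' : S → ℝ)
    (hρ0 : ∀ x, 0 ≤ ρ x) (hρ1 : ∑ x, ρ x = 1)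
    (hρ'0 : ∀ x, 0 ≤ ρ' x) (hρ'1 : ∑ x, ρ' x = 1)
    (hρ''0 : ∀ x, 0 ≤ ρ'' x) (hρ''1 : ∑ x, ρ'' x = 1)
    (hmax : ∀ p : S → ℝ, (∀ x, 0 ≤ p x) → (∑ x, p x) = 1 →
      (∑ x, p x • φ x) = (∑ x, ρ x • φ x) →
      (-∑ x, p x * Real.log (p x)) ≤ (-∑ x, ρ x * Real.log (ρ x)))
    (hρ'constr : (∑ x, ρ' x • φ x) = ∑ x, ρ x • φ (U₁ x))
    (hmax' : ∀ p : S → ℝ, (∀ x, 0 ≤ p x) → (∑ x, p x) = 1 →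
      (∑ x, p x • φ x) = (∑ x, ρ' x • φ x) →
      (-∑ x, p x * Real.log (p x)) ≤ (-∑ x, ρ' x * Real.log (ρ' x)))
    (hρ''constr : (∑ x, ρ'' x • φ x) = ∑ x, ρ' x • φ (U₂ x))
    (hmax'' : ∀ p : S → ℝ, (∀ x, 0 ≤ p x) → (∑ x, p x) = 1 →
      (∑ x, p x • φ x) = (∑ x, ρ'' x • φ x) →
      (-∑ x, p x * Real.log (p x)) ≤ (-∑ x, ρ'' x * Real.log (ρ'' x))) :
    (-∑ x, ρ x * Real.log (ρ x)) ≤ (-∑ x, ρ' x * Real.log (ρ' x)) ∧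
    (-∑ x, ρ' x * Real.log (ρ' x)) ≤ (-∑ x, ρ'' x * Real.log (ρ'' x)) := by
  exact ⟨push_step n φ U₁ hU₁ ρ ρ' hρ0 hρ1 hρ'constr hmax',
    push_step n φ U₂ hU₂ ρ' ρ'' hρ'0 hρ'1 hρ''constr hmax''⟩
end
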